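/- Suppose κ₂ > 0, κ₄ > 0, κ₃ < 1 and μ_A > 0. If λ^A(t) converges as t → ∞ to a finite limit ℓ_A, then λ^B(t) converges as t → ∞ to Ψ₂(ℓ_A) = (μ_B + Φ_{A→B}(κ₄ ℓ_A)) / (1−κ₃). -/

import Mathlib

open MeasureTheory Filter Topology Set
open scoped ENNReal

/-- Convolution term `∫₀ᵗ h(t-u) f(u) du`. -/
noncomputable def convK (h f : ℝ → ℝ) (t : ℝ) : ℝ :=
  ∫ u in (0:ℝ)..t, h (t - u) * f u

/-- `L¹` norm on `[0,∞)` of a kernel. -/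
noncomputable def l1 (h : ℝ → ℝ) : ℝ :=
  ∫ s in Set.Ioi (0:ℝ), h s

/-- A nonnegative measurable kernel with finite `L¹` norm on `[0,∞)`. -/
def KernelL1 (h : ℝ → ℝ) : Prop :=
  Measurable h ∧ (∀ u, 0 ≤ u → 0 ≤ h u) ∧ IntegrableOn h (Set.Ioi 0)

/-- A nonnegative integrable kernel vanishing at infinity. -/
def KernelOK (h : ℝ → ℝ) : Prop :=
  KernelL1 h ∧ Tendsto h atTop (𝓝 0)

/-- Properties of the inhibition kernel `Φ_{B→A}`. -/
def InhibOK (Φ : ℝ → ℝ) : Prop :=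
  (∃ K, 0 ≤ K ∧ ∀ x y, 0 ≤ x → 0 ≤ y → |Φ x - Φ y| ≤ K * |x - y|) ∧
  AntitoneOn Φ (Set.Ici 0) ∧ Φ 0 = 1 ∧
  (∀ x, 0 ≤ x → 0 ≤ Φ x ∧ Φ x ≤ 1) ∧
  Tendsto Φ atTop (𝓝 0)

/-- Properties of the feedback kernel `Φ_{A→B}`. -/
def FeedOK (Φ : ℝ → ℝ) : Prop :=
  (∃ K, 0 ≤ K ∧ ∀ x y, 0 ≤ x → 0 ≤ y → |Φ x - Φ y| ≤ K * |x - y|) ∧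
  MonotoneOn Φ (Set.Ici 0) ∧ Φ 0 = 0 ∧
  (∀ x, 0 ≤ x → 0 ≤ Φ x) ∧
  Tendsto Φ atTop atTop

/-- The general mean-field system of intensities. -/
def IsGenSys (α : ℝ) (h₁ h₂ h₃ h₄ ΦA ΦB ΦBA ΦAB lA lB : ℝ → ℝ) : Prop :=
  Continuous lA ∧ Continuous lB ∧ (∀ t, 0 ≤ lA t) ∧ (∀ t, 0 ≤ lB t) ∧
  (∀ t, 0 ≤ t →
    lA t = ΦA (α * convK h₁ lA t) * ΦBA ((1 - α) * convK h₂ lB t)) ∧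
  (∀ t, 0 ≤ t →
    lB t = ΦB ((1 - α) * convK h₃ lB t) + ΦAB (α * convK h₄ lA t))

/-- The linear mean-field system: `Φ_A(x) = μ_A + x` and `Φ_B(x) = μ_B + x`. -/
def IsLinSys (α : ℝ) (h₁ h₂ h₃ h₄ ΦBA ΦAB : ℝ → ℝ) (μA μB : ℝ)
    (lA lB : ℝ → ℝ) : Prop :=
  IsGenSys α h₁ h₂ h₃ h₄ (fun x => μA + x) (fun x => μB + x) ΦBA ΦAB lA lB

/-- `limsup_{t→∞} f(t)` with values in `[0,∞]`. -/
noncomputable def elimsup (f : ℝ → ℝ) : ℝ≥0∞ :=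
  Filter.limsup (fun t => ENNReal.ofReal (f t)) Filter.atTop

/-- `liminf_{t→∞} f(t)` with values in `[0,∞]`. -/
noncomputable def eliminf (f : ℝ → ℝ) : ℝ≥0∞ :=
  Filter.liminf (fun t => ENNReal.ofReal (f t)) Filter.atTop

/-- The domain `I_{κ₁,κ₂} = {x ≥ 0 : κ₁ Φ_{B→A}(κ₂ x) < 1}`. -/
def Idom (κ₁ κ₂ : ℝ) (ΦBA : ℝ → ℝ) : Set ℝ :=
  {x : ℝ | 0 ≤ x ∧ κ₁ * ΦBA (κ₂ * x) < 1}

/-- `Ψ₁(x) = μ_A Φ_{B→A}(κ₂x)/(1 - κ₁Φ_{B→A}(κ₂x))`. -/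
noncomputable def Psi1 (μA κ₁ κ₂ : ℝ) (ΦBA : ℝ → ℝ) (x : ℝ) : ℝ :=
  μA * ΦBA (κ₂ * x) / (1 - κ₁ * ΦBA (κ₂ * x))

/-- `Ψ₂(x) = (μ_B + Φ_{A→B}(κ₄x))/(1-κ₃)`. -/
noncomputable def Psi2 (μB κ₃ κ₄ : ℝ) (ΦAB : ℝ → ℝ) (x : ℝ) : ℝ :=
  (μB + ΦAB (κ₄ * x)) / (1 - κ₃)

/-- The fixed-point map `Φ = Ψ₂ ∘ Ψ₁`. -/
noncomputable def PhiMap (μA μB κ₁ κ₂ κ₃ κ₄ : ℝ) (ΦBA ΦAB : ℝ → ℝ) (x : ℝ) : ℝ :=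
  Psi2 μB κ₃ κ₄ ΦAB (Psi1 μA κ₁ κ₂ ΦBA x)

/-- The set `U_Φ` of admissible pairs `(u,v)`. -/
def UPhi (μA μB κ₁ κ₂ κ₃ κ₄ : ℝ) (ΦBA ΦAB : ℝ → ℝ) (ℓ : ℝ) : Set (ℝ × ℝ) :=
  {p : ℝ × ℝ | p.1 ∈ Idom κ₁ κ₂ ΦBA ∧ p.2 ∈ Idom κ₁ κ₂ ΦBA ∧
    PhiMap μA μB κ₁ κ₂ κ₃ κ₄ ΦBA ΦAB p.2 ≤ p.1 ∧ p.1 ≤ ℓ ∧ ℓ ≤ p.2 ∧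
    p.2 ≤ PhiMap μA μB κ₁ κ₂ κ₃ κ₄ ΦBA ΦAB p.1 ∧ μB / (1 - κ₃) ≤ p.1}

/-!
`λ^B` solves the renewal equation `λ^B = g + k ⋆ λ^B` with kernel `k = (1 - α) h₃` of mass
`κ₃ < 1` and forcing `g = μ_B + Φ_{A→B}(α h₄ ⋆ λ^A)`. Convolution against an integrable kernel maps
a function with limit `ℓ` to one with limit `‖h‖₁ ℓ`, so `g → c := μ_B + Φ_{A→B}(κ₄ ℓ_A)`.
A subcritical renewal equation transfers this: a maximum argument bounds the solution a priori,
and since the convolution sees the distant past only through a vanishing tail of the kernel, an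
eventual bound `B` on `|λ^B - c / (1 - κ₃)|` improves to `κ₃ B + ε`; iterating gives the limit.
-/

lemma l1_const_mul (a : ℝ) (h : ℝ → ℝ) : l1 (fun s => a * h s) = a * l1 h :=
  integral_const_mul a h

lemma convK_const_mul (a : ℝ) (h f : ℝ → ℝ) (t : ℝ) :
    convK (fun s => a * h s) f t = a * convK h f t := by
  simp only [convK, mul_assoc, intervalIntegral.integral_const_mul]

lemma FeedOK.continuousOn {Φ : ℝ → ℝ} (hΦ : FeedOK Φ) : ContinuousOn Φ (Ici 0) := by
  obtain ⟨⟨K, hK0, hK⟩, -⟩ := hΦ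
  refine (LipschitzOnWith.of_dist_le_mul (K := ⟨K, hK0⟩) fun x hx y hy => ?_).continuousOn
  rw [Real.dist_eq, Real.dist_eq]
  exact hK x y hx hy

lemma exists_abs_le_of_tendsto {g : ℝ → ℝ} {c : ℝ} (hg : Tendsto g atTop (𝓝 c))
    (hloc : ∀ T, ∃ C, ∀ t ∈ Icc 0 T, |g t| ≤ C) : ∃ G, ∀ t, 0 ≤ t → |g t| ≤ G := by
  obtain ⟨T, hT⟩ :=
    (hg.abs.eventually (eventually_le_nhds (lt_add_one |c|))).exists_forall_of_atTop
  obtain ⟨C, hC⟩ := hloc T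
  refine ⟨max C (|c| + 1), fun t ht => ?_⟩
  rcases le_or_gt t T with htT | hTt
  · exact (hC t ⟨ht, htT⟩).trans (le_max_left _ _)
  · exact (hT t hTt.le).trans (le_max_right _ _)

namespace KernelL1

variable {h f : ℝ → ℝ}

lemma l1_nonneg (hk : KernelL1 h) : 0 ≤ l1 h :=
  setIntegral_nonneg measurableSet_Ioi fun u hu => hk.2.1 u (le_of_lt hu)

lemma const_mul (hk : KernelL1 h) {a : ℝ} (ha : 0 ≤ a) : KernelL1 (fun s => a * h s) :=
  ⟨hk.1.const_mul a, fun u hu => mul_nonneg ha (hk.2.1 u hu), hk.2.2.const_mul a⟩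

lemma tendsto_integral_l1 (hk : KernelL1 h) :
    Tendsto (fun t => ∫ s in (0:ℝ)..t, h s) atTop (𝓝 (l1 h)) :=
  intervalIntegral_tendsto_integral_Ioi 0 hk.2.2 tendsto_id

lemma intervalIntegrable (hk : KernelL1 h) {a b : ℝ} (ha : 0 ≤ a) (hb : 0 ≤ b) :
    IntervalIntegrable h volume a b :=
  intervalIntegrable_iff.2 (hk.2.2.mono_set fun _ hx => (le_min ha hb).trans_lt hx.1)

lemma intervalIntegrable_comp_sub (hk : KernelL1 h) {a b t : ℝ} (ha : a ≤ t) (hb : b ≤ t) :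
    IntervalIntegrable (fun u => h (t - u)) volume a b := by
  simpa using (hk.intervalIntegrable (sub_nonneg.2 ha) (sub_nonneg.2 hb)).comp_sub_left t

lemma intervalIntegrable_conv (hk : KernelL1 h) (hf : Continuous f) {a b t : ℝ}
    (ha : a ≤ t) (hb : b ≤ t) : IntervalIntegrable (fun u => h (t - u) * f u) volume a b :=
  (hk.intervalIntegrable_comp_sub ha hb).mul_continuousOn hf.continuousOn

lemma integral_le_l1 (hk : KernelL1 h) {b : ℝ} (hb : 0 ≤ b) : ∫ s in (0:ℝ)..b, h s ≤ l1 h := by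
  rw [intervalIntegral.integral_of_le hb]
  exact setIntegral_mono_set hk.2.2
    ((ae_restrict_mem measurableSet_Ioi).mono fun x hx => hk.2.1 x (le_of_lt hx))
    Ioc_subset_Ioi_self.eventuallyLE

lemma abs_integral_conv_le (hk : KernelL1 h) (hf : Continuous f) {a b t C : ℝ}
    (hab : a ≤ b) (hbt : b ≤ t) (hC : ∀ u ∈ Icc a b, |f u| ≤ C) :
    |∫ u in a..b, h (t - u) * f u| ≤ C * ∫ s in (t - b)..(t - a), h s := calc
  _ ≤ ∫ u in a..b, h (t - u) * C := by
      refine (intervalIntegral.abs_integral_le_integral_abs hab).trans <|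
        intervalIntegral.integral_mono_on hab
          (hk.intervalIntegrable_conv hf (hab.trans hbt) hbt).abs
          ((hk.intervalIntegrable_comp_sub (hab.trans hbt) hbt).mul_const C) fun u hu => ?_
      have hh := hk.2.1 (t - u) (by linarith [hu.2])
      rw [abs_mul, abs_of_nonneg hh]
      exact mul_le_mul_of_nonneg_left (hC u hu) hh
  _ = C * ∫ s in (t - b)..(t - a), h s := by
      rw [intervalIntegral.integral_mul_const, intervalIntegral.integral_comp_sub_left, mul_comm]

lemma abs_convK_le (hk : KernelL1 h) (hf : Continuous f) {t M : ℝ} (ht : 0 ≤ t)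
    (hM : ∀ u ∈ Icc 0 t, |f u| ≤ M) : |convK h f t| ≤ l1 h * M := by
  have hM0 : 0 ≤ M := (abs_nonneg _).trans (hM 0 ⟨le_rfl, ht⟩)
  have hbound := hk.abs_integral_conv_le hf ht le_rfl hM
  rw [sub_self, sub_zero] at hbound
  calc |convK h f t| ≤ M * ∫ s in (0:ℝ)..t, h s := hbound
    _ ≤ l1 h * M := by
      rw [mul_comm M]
      exact mul_le_mul_of_nonneg_right (hk.integral_le_l1 ht) hM0

lemma convK_nonneg (hk : KernelL1 h) (hf : ∀ u, 0 ≤ u → 0 ≤ f u) {t : ℝ} (ht : 0 ≤ t) :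
    0 ≤ convK h f t :=
  intervalIntegral.integral_nonneg ht fun u hu =>
    mul_nonneg (hk.2.1 _ (by linarith [hu.2])) (hf u hu.1)

lemma convK_add_const (hk : KernelL1 h) (hf : Continuous f) {t : ℝ} (ht : 0 ≤ t) (c : ℝ) :
    convK h (fun u => f u + c) t = convK h f t + c * ∫ s in (0:ℝ)..t, h s := by
  simp only [convK, mul_add]
  rw [intervalIntegral.integral_add (hk.intervalIntegrable_conv hf ht le_rfl)
      ((hk.intervalIntegrable_comp_sub ht le_rfl).mul_const c),
    intervalIntegral.integral_mul_const, intervalIntegral.integral_comp_sub_left, sub_self,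
    sub_zero, mul_comm _ c]

/-- The kernel mass `∫_{t-T}^t h` seen by the past `[0, T]` vanishes as `t → ∞`, so only the
eventual bound `B` of `f` matters. -/
lemma eventually_abs_convK_le (hk : KernelL1 h) (hf : Continuous f) {B ε : ℝ}
    (hB : ∀ᶠ u in atTop, |f u| ≤ B) (hε : 0 < ε) :
    ∀ᶠ t in atTop, |convK h f t| ≤ l1 h * B + ε := by
  obtain ⟨T₀, hT₀⟩ := hB.exists_forall_of_atTop
  set T := max T₀ 0
  have hT0 : 0 ≤ T := le_max_right _ _
  have hT : ∀ u, T ≤ u → |f u| ≤ B := fun u hu => hT₀ u ((le_max_left _ _).trans hu)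
  have hB0 : 0 ≤ B := (abs_nonneg _).trans (hT T le_rfl)
  obtain ⟨M, hM⟩ := isCompact_Icc.exists_bound_of_continuousOn (s := Icc 0 T) hf.continuousOn
  have hmass : Tendsto (fun t => M * ((∫ s in (0:ℝ)..t, h s) - ∫ s in (0:ℝ)..(t - T), h s))
      atTop (𝓝 0) := by
    have hshift := hk.tendsto_integral_l1.comp (tendsto_atTop_add_const_right _ (-T) tendsto_id)
    simpa [sub_eq_add_neg] using (hk.tendsto_integral_l1.sub hshift).const_mul M
  filter_upwards [eventually_ge_atTop T, hmass.eventually (eventually_le_nhds hε)]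
    with t ht hsmall
  have hhead : |∫ u in (0:ℝ)..T, h (t - u) * f u| ≤ ε := by
    refine (hk.abs_integral_conv_le hf hT0 ht fun u hu => hM u hu).trans
      (le_of_eq_of_le ?_ hsmall)
    rw [sub_zero, intervalIntegral.integral_interval_sub_left
      (hk.intervalIntegrable le_rfl (hT0.trans ht)) (hk.intervalIntegrable le_rfl (by linarith))]
  have htail : |∫ u in T..t, h (t - u) * f u| ≤ l1 h * B := by
    refine (hk.abs_integral_conv_le hf ht le_rfl fun u hu => hT u hu.1).trans ?_
    rw [sub_self, mul_comm]
    exact mul_le_mul_of_nonneg_right (hk.integral_le_l1 (by linarith)) hB0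
  rw [convK, ← intervalIntegral.integral_add_adjacent_intervals
    (hk.intervalIntegrable_conv hf (hT0.trans ht) ht) (hk.intervalIntegrable_conv hf ht le_rfl)]
  linarith [abs_add_le (∫ u in (0:ℝ)..T, h (t - u) * f u) (∫ u in T..t, h (t - u) * f u)]

lemma tendsto_convK_zero (hk : KernelL1 h) (hf : Continuous f) (hf0 : Tendsto f atTop (𝓝 0)) :
    Tendsto (convK h f) atTop (𝓝 0) := by
  refine NormedAddGroup.tendsto_nhds_zero.2 fun ε hε => ?_
  have hpos : 0 < l1 h + 2 := by linarith [hk.l1_nonneg]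
  set δ := ε / (l1 h + 2)
  have hδ : 0 < δ := div_pos hε hpos
  have hεδ : (l1 h + 2) * δ = ε := mul_div_cancel₀ ε hpos.ne'
  have hsmall : ∀ᶠ u in atTop, |f u| ≤ δ :=
    (NormedAddGroup.tendsto_nhds_zero.1 hf0 δ hδ).mono fun _ hu => hu.le
  filter_upwards [hk.eventually_abs_convK_le hf hsmall hδ] with t ht
  rw [Real.norm_eq_abs]
  nlinarith

lemma tendsto_convK (hk : KernelL1 h) (hf : Continuous f) {l : ℝ}
    (hl : Tendsto f atTop (𝓝 l)) : Tendsto (convK h f) atTop (𝓝 (l1 h * l)) := by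
  have hg : Continuous fun u => f u - l := hf.sub continuous_const
  have hlim := (hk.tendsto_convK_zero hg (by simpa using hl.sub_const l)).add
    (hk.tendsto_integral_l1.const_mul l)
  rw [zero_add, mul_comm l] at hlim
  refine hlim.congr' ((eventually_ge_atTop 0).mono fun t ht => ?_)
  simpa using (hk.convK_add_const hg ht l).symm

lemma exists_abs_sub_convK_le (hk : KernelL1 h) (hf : Continuous f) (T : ℝ) :
    ∃ C, ∀ t ∈ Icc 0 T, |f t - convK h f t| ≤ C := by
  obtain ⟨M, hM⟩ := isCompact_Icc.exists_bound_of_continuousOn (s := Icc 0 T) hf.continuousOn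
  exact ⟨M + l1 h * M, fun t ht => (abs_sub _ _).trans <| add_le_add (hM t ht)
    (hk.abs_convK_le hf ht.1 fun u hu => hM u ⟨hu.1, hu.2.trans ht.2⟩)⟩

-- Evaluate the equation at a maximum point of `|f|` on `[0, t]`.
lemma abs_le_of_abs_sub_convK_le (hk : KernelL1 h) (hf : Continuous f) (hρ : l1 h < 1) {G : ℝ}
    (hG : ∀ t, 0 ≤ t → |f t - convK h f t| ≤ G) {t : ℝ} (ht : 0 ≤ t) :
    |f t| ≤ G / (1 - l1 h) := by
  obtain ⟨t₀, ht₀, hmax⟩ :=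
    isCompact_Icc.exists_isMaxOn (nonempty_Icc.2 ht) (continuous_abs.comp hf).continuousOn
  have hconv : |convK h f t₀| ≤ l1 h * |f t₀| :=
    hk.abs_convK_le hf ht₀.1 fun u hu => hmax ⟨hu.1, hu.2.trans ht₀.2⟩
  have hf₀ : |f t₀| ≤ G / (1 - l1 h) := by
    rw [le_div_iff₀ (sub_pos.2 hρ)]
    linarith [abs_sub_abs_le_abs_sub (f t₀) (convK h f t₀), hG t₀ ht₀.1]
  exact (hmax ⟨ht, le_rfl⟩).trans hf₀

lemma tendsto_zero_of_tendsto_sub_convK_zero (hk : KernelL1 h) (hf : Continuous f)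
    (hρ : l1 h < 1) (h0 : Tendsto (fun t => f t - convK h f t) atTop (𝓝 0)) :
    Tendsto f atTop (𝓝 0) := by
  set ρ := l1 h
  have hstep : ∀ B ε, 0 < ε → (∀ᶠ t in atTop, |f t| ≤ B) →
      ∀ᶠ t in atTop, |f t| ≤ ρ * B + ε := by
    intro B ε hε hB
    have hsmall : ∀ᶠ t in atTop, |f t - convK h f t| ≤ ε / 2 :=
      (NormedAddGroup.tendsto_nhds_zero.1 h0 _ (half_pos hε)).mono fun _ ht => ht.le
    filter_upwards [hk.eventually_abs_convK_le hf hB (half_pos hε), hsmall] with t hconv hforce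
    have := abs_add_le (f t - convK h f t) (convK h f t)
    rw [sub_add_cancel] at this
    linarith
  obtain ⟨G, hG⟩ := exists_abs_le_of_tendsto h0 (hk.exists_abs_sub_convK_le hf)
  set M := G / (1 - ρ)
  refine NormedAddGroup.tendsto_nhds_zero.2 fun δ hδ => ?_
  have hiter : ∀ n : ℕ, ∀ᶠ t in atTop, |f t| ≤ ρ ^ n * M + δ / 2 := by
    intro n
    induction n with
    | zero =>
      exact (eventually_ge_atTop 0).mono fun t ht => by
        linarith [hk.abs_le_of_abs_sub_convK_le hf hρ hG ht]
    | succ n ih =>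
      refine (hstep _ _ (mul_pos (sub_pos.2 hρ) (half_pos hδ)) ih).mono fun t ht =>
        ht.trans (le_of_eq ?_)
      ring
  have hpow : Tendsto (fun n : ℕ => ρ ^ n * M) atTop (𝓝 0) := by
    simpa using (tendsto_pow_atTop_nhds_zero_of_lt_one hk.l1_nonneg hρ).mul_const M
  obtain ⟨n, hn⟩ := (hpow.eventually (gt_mem_nhds (half_pos hδ))).exists
  filter_upwards [hiter n] with t ht
  rw [Real.norm_eq_abs]
  linarith

theorem tendsto_of_tendsto_sub_convK (hk : KernelL1 h) (hf : Continuous f) (hρ : l1 h < 1)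
    {c : ℝ} (hc : Tendsto (fun t => f t - convK h f t) atTop (𝓝 c)) :
    Tendsto f atTop (𝓝 (c / (1 - l1 h))) := by
  set c' := c / (1 - l1 h)
  have hc' : c' * (1 - l1 h) = c := div_mul_cancel₀ c (sub_pos.2 hρ).ne'
  have hF : Continuous fun t => f t - c' := hf.sub continuous_const
  have hforce : Tendsto (fun t => (f t - c') - convK h (fun u => f u - c') t) atTop (𝓝 0) := by
    have hlim := (hc.sub_const c').add (hk.tendsto_integral_l1.const_mul c')
    rw [show c - c' + c' * l1 h = 0 by linear_combination -hc'] at hlim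
    refine hlim.congr' ((eventually_ge_atTop 0).mono fun t ht => ?_)
    have hsplit := hk.convK_add_const hF ht c'
    simp only [sub_add_cancel] at hsplit
    rw [hsplit]
    ring
  simpa using (hk.tendsto_zero_of_tendsto_sub_convK_zero hF hρ hforce).add_const c'

end KernelL1

theorem stmt9_general
    (α : ℝ) (hα : α ∈ Set.Ioo (0:ℝ) 1)
    (h₁ h₂ h₃ h₄ : ℝ → ℝ)
    (hh₃ : KernelOK h₃) (hh₄ : KernelOK h₄)
    (κ₃ κ₄ : ℝ)
    (hκ₃ : κ₃ = (1 - α) * l1 h₃) (hκ₄ : κ₄ = α * l1 h₄)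
    (ΦBA ΦAB : ℝ → ℝ) (hAB : FeedOK ΦAB)
    (μA μB : ℝ)
    (hk3 : κ₃ < 1) :
    ∀ lA lB, IsLinSys α h₁ h₂ h₃ h₄ ΦBA ΦAB μA μB lA lB →
      ∀ ℓA : ℝ, Tendsto lA atTop (𝓝 ℓA) →
        Tendsto lB atTop (𝓝 ((μB + ΦAB (κ₄ * ℓA)) / (1 - κ₃))) := by
  intro lA lB hsys ℓA hlA
  obtain ⟨hcA, hcB, hposA, -, -, heqB⟩ := hsys
  obtain ⟨hα0, hα1⟩ := hα
  have hk : KernelL1 (fun s => (1 - α) * h₃ s) := hh₃.1.const_mul (sub_nonneg.2 hα1.le)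
  have hl1 : l1 (fun s => (1 - α) * h₃ s) = κ₃ := by rw [l1_const_mul, hκ₃]
  have harg : Tendsto (fun t => α * convK h₄ lA t) atTop (𝓝 (κ₄ * ℓA)) := by
    rw [hκ₄, mul_assoc]
    exact (hh₄.1.tendsto_convK hcA hlA).const_mul α
  have harg_nonneg : ∀ᶠ t in atTop, 0 ≤ α * convK h₄ lA t :=
    (eventually_ge_atTop 0).mono fun t ht =>
      mul_nonneg hα0.le (hh₄.1.convK_nonneg (fun u _ => hposA u) ht)
  have hforce : Tendsto (fun t => lB t - convK (fun s => (1 - α) * h₃ s) lB t) atTop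
      (𝓝 (μB + ΦAB (κ₄ * ℓA))) := by
    refine (((hAB.continuousOn _ (ge_of_tendsto harg harg_nonneg)).tendsto.comp
      (tendsto_nhdsWithin_iff.2 ⟨harg, harg_nonneg⟩)).const_add μB).congr'
      ((eventually_ge_atTop 0).mono fun t ht => ?_)
    simp only [Function.comp_apply, convK_const_mul]
    rw [heqB t ht]
    ring
  rw [← hl1]
  exact hk.tendsto_of_tendsto_sub_convK hcB (hl1 ▸ hk3) hforce

/-- Full connectivity, subcritical B: if `λ^A` converges to `ℓ_A` then `λ^B`
converges to `Ψ₂(ℓ_A)`. -/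
theorem stmt9
    (α : ℝ) (hα : α ∈ Set.Ioo (0:ℝ) 1)
    (h₁ h₂ h₃ h₄ : ℝ → ℝ)
    (hh₁ : KernelOK h₁) (hh₂ : KernelOK h₂) (hh₃ : KernelOK h₃) (hh₄ : KernelOK h₄)
    (κ₁ κ₂ κ₃ κ₄ : ℝ)
    (hκ₁ : κ₁ = α * l1 h₁) (hκ₂ : κ₂ = (1 - α) * l1 h₂)
    (hκ₃ : κ₃ = (1 - α) * l1 h₃) (hκ₄ : κ₄ = α * l1 h₄)
    (ΦBA ΦAB : ℝ → ℝ) (hBA : InhibOK ΦBA) (hAB : FeedOK ΦAB)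
    (μA μB : ℝ) (hμA : 0 < μA) (hμB : 0 ≤ μB)
    (hk2 : 0 < κ₂) (hk4 : 0 < κ₄) (hk3 : κ₃ < 1) :
    ∀ lA lB, IsLinSys α h₁ h₂ h₃ h₄ ΦBA ΦAB μA μB lA lB →
      ∀ ℓA : ℝ, Tendsto lA atTop (𝓝 ℓA) →
        Tendsto lB atTop (𝓝 ((μB + ΦAB (κ₄ * ℓA)) / (1 - κ₃))) :=
  stmt9_general α hα h₁ h₂ h₃ h₄ hh₃ hh₄ κ₃ κ₄ hκ₃ hκ₄ ΦBA ΦAB hAB μA μB hk3
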